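/- Occupancy-measure difference bound (last statement of Lemma: om-diff of the paper): Let π be a policy and let P and P̂ be two transition functions; write q = q_{P,π} and q̂ = q_{P̂,π}. Suppose ε : S × A × {1,…,H−1} × S → ℝ≥0 satisfies |P̂(s,a,h)(s') − P(s,a,h)(s')| ≤ ε(s,a,h,s') for all (s,a,h,s'), and c : S × A × {1,…,H} → ℝ satisfies 0 ≤ c(s,a,h) ≤ 1 for all (s,a,h). Then Σ_{s,a,h} |q̂(s,a,h) − q(s,a,h)| · c(s,a,h) ≤ H · Σ_{h=1}^{H−1} Σ_{s∈S} Σ_{a∈A} Σ_{s'∈S} q(s,a,h) · ε(s,a,h,s'). -/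
import Mathlib


open Finset

/-- Finite-horizon occupancy measure `q_{P,π,(s̄,h̄)}`, defined recursively over layers. -/
noncomputable def occ {S A : Type*} [Fintype S] [Fintype A] [DecidableEq S]
    (π : S → ℕ → A → ℝ) (P : S → A → ℕ → S → ℝ) (sb : S) (hb : ℕ) :
    ℕ → S → A → ℝ
  | 0 => fun s a => if hb = 0 then (if s = sb then π s 0 a else 0) else 0
  | (h + 1) => fun s a =>
      if h + 1 < hb then 0
      else if h + 1 = hb then (if s = sb then π s (h + 1) a else 0)
      else π s (h + 1) a * ∑ s' : S, ∑ a' : A, P s' a' h s * occ π P sb hb h s' a'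

lemma occ_one {S A : Type*} [Fintype S] [Fintype A] [DecidableEq S]
    (π : S → ℕ → A → ℝ) (P : S → A → ℕ → S → ℝ) (sb : S) (s : S) (a : A) :
    occ π P sb 1 1 s a = if s = sb then π s 1 a else 0 := by
  show occ π P sb 1 (0+1) s a = _
  simp [occ]

lemma occ_succ {S A : Type*} [Fintype S] [Fintype A] [DecidableEq S]
    (π : S → ℕ → A → ℝ) (P : S → A → ℕ → S → ℝ) (sb : S)
    {h : ℕ} (hh : 1 ≤ h) (s : S) (a : A) :
    occ π P sb 1 (h+1) s a
      = π s (h+1) a * ∑ s' : S, ∑ a' : A, P s' a' h s * occ π P sb 1 h s' a' := by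
  have h1 : ¬ (h+1 < 1) := by omega
  have h2 : ¬ (h+1 = 1) := by omega
  simp only [occ, if_neg h1, if_neg h2]

/-- Occupancy-measure difference bound (last statement of Lemma om-diff): if
`|P̂ − P| ≤ ε` entrywise and `0 ≤ c ≤ 1`, then
`∑_{s,a,h} |q̂(s,a,h) − q(s,a,h)| c(s,a,h) ≤ H ∑_{h=1}^{H−1} ∑_{s,a,s'} q(s,a,h) ε(s,a,h,s')`. -/
theorem om_diff_bound
    {S A : Type*} [Fintype S] [Fintype A] [DecidableEq S] [Nonempty S] [Nonempty A]
    (H : ℕ) (hH : 2 ≤ H) (s0 : S)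
    (π : S → ℕ → A → ℝ)
    (hπ0 : ∀ s, ∀ h ∈ Finset.Icc 1 H, ∀ a, 0 ≤ π s h a)
    (hπ1 : ∀ s, ∀ h ∈ Finset.Icc 1 H, ∑ a : A, π s h a = 1)
    (P Phat : S → A → ℕ → S → ℝ)
    (hP0 : ∀ s a, ∀ h ∈ Finset.Icc 1 (H - 1), ∀ s', 0 ≤ P s a h s')
    (hP1 : ∀ s a, ∀ h ∈ Finset.Icc 1 (H - 1), ∑ s' : S, P s a h s' = 1)
    (hPhat0 : ∀ s a, ∀ h ∈ Finset.Icc 1 (H - 1), ∀ s', 0 ≤ Phat s a h s')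
    (hPhat1 : ∀ s a, ∀ h ∈ Finset.Icc 1 (H - 1), ∑ s' : S, Phat s a h s' = 1)
    (ε : S → A → ℕ → S → ℝ)
    (hε0 : ∀ s a, ∀ h ∈ Finset.Icc 1 (H - 1), ∀ s', 0 ≤ ε s a h s')
    (hε : ∀ s a, ∀ h ∈ Finset.Icc 1 (H - 1), ∀ s',
      |Phat s a h s' - P s a h s'| ≤ ε s a h s')
    (c : S → A → ℕ → ℝ)
    (hc0 : ∀ s a, ∀ h ∈ Finset.Icc 1 H, 0 ≤ c s a h)
    (hc1 : ∀ s a, ∀ h ∈ Finset.Icc 1 H, c s a h ≤ 1) :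
    ∑ s : S, ∑ a : A, ∑ h ∈ Finset.Icc 1 H,
        |occ π Phat s0 1 h s a - occ π P s0 1 h s a| * c s a h ≤
      (H : ℝ) * ∑ h ∈ Finset.Icc 1 (H - 1), ∑ s : S, ∑ a : A, ∑ s' : S,
        occ π P s0 1 h s a * ε s a h s' := by
  classical
  -- nonnegativity of the occupancy measure for P
  have qnn : ∀ h, 1 ≤ h → h ≤ H → ∀ s a, 0 ≤ occ π P s0 1 h s a := by
    intro h
    induction h with
    | zero => omega
    | succ n ih =>
      intro _ h2 s a
      rcases Nat.eq_zero_or_pos n with hn | hn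
      · subst hn
        rw [occ_one]
        split
        · exact hπ0 s 1 (by simp [Finset.mem_Icc]; omega) a
        · exact le_refl 0
      · rw [occ_succ π P s0 hn]
        refine mul_nonneg (hπ0 s (n+1) (by simp [Finset.mem_Icc]; omega) a) ?_
        refine Finset.sum_nonneg fun s' _ => Finset.sum_nonneg fun a' _ => ?_
        exact mul_nonneg (hP0 s' a' n (by simp [Finset.mem_Icc]; omega) s)
          (ih hn (by omega) s' a')
  set D : ℕ → ℝ := fun h => ∑ s : S, ∑ a : A,
      |occ π Phat s0 1 h s a - occ π P s0 1 h s a| with hD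
  set E : ℕ → ℝ := fun h => ∑ s : S, ∑ a : A, ∑ s' : S,
      occ π P s0 1 h s a * ε s a h s' with hE
  have hstep : ∀ h, 1 ≤ h → h + 1 ≤ H → D (h+1) ≤ E h + D h := by
    intro h h1 h2
    have hmP : h ∈ Finset.Icc 1 (H-1) := by simp [Finset.mem_Icc]; omega
    have hmπ : h+1 ∈ Finset.Icc 1 H := by simp [Finset.mem_Icc]; omega
    have key : ∀ s a, |occ π Phat s0 1 (h+1) s a - occ π P s0 1 (h+1) s a|
        ≤ π s (h+1) a * ∑ s' : S, ∑ a' : A,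
            (ε s' a' h s * occ π P s0 1 h s' a'
              + Phat s' a' h s * |occ π Phat s0 1 h s' a' - occ π P s0 1 h s' a'|) := by
      intro s a
      rw [occ_succ π Phat s0 h1, occ_succ π P s0 h1, ← mul_sub, abs_mul,
          abs_of_nonneg (hπ0 s (h+1) hmπ a)]
      refine mul_le_mul_of_nonneg_left ?_ (hπ0 s (h+1) hmπ a)
      rw [← Finset.sum_sub_distrib]
      refine (Finset.abs_sum_le_sum_abs _ _).trans ?_
      refine Finset.sum_le_sum fun s' _ => ?_
      rw [← Finset.sum_sub_distrib]
      refine (Finset.abs_sum_le_sum_abs _ _).trans ?_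
      refine Finset.sum_le_sum fun a' _ => ?_
      have hdec : Phat s' a' h s * occ π Phat s0 1 h s' a'
            - P s' a' h s * occ π P s0 1 h s' a'
          = (Phat s' a' h s - P s' a' h s) * occ π P s0 1 h s' a'
            + Phat s' a' h s * (occ π Phat s0 1 h s' a' - occ π P s0 1 h s' a') := by
        ring
      rw [hdec]
      refine (abs_add_le _ _).trans ?_
      gcongr ?_ + ?_
      · rw [abs_mul, abs_of_nonneg (qnn h h1 (by omega) s' a')]
        exact mul_le_mul_of_nonneg_right (hε s' a' h hmP s) (qnn h h1 (by omega) s' a')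
      · rw [abs_mul, abs_of_nonneg (hPhat0 s' a' h hmP s)]
    calc D (h+1)
        ≤ ∑ s : S, ∑ a : A, π s (h+1) a * ∑ s' : S, ∑ a' : A,
            (ε s' a' h s * occ π P s0 1 h s' a'
              + Phat s' a' h s * |occ π Phat s0 1 h s' a' - occ π P s0 1 h s' a'|) := by
          refine Finset.sum_le_sum fun s _ => Finset.sum_le_sum fun a _ => key s a
      _ = ∑ s : S, ∑ s' : S, ∑ a' : A,
            (ε s' a' h s * occ π P s0 1 h s' a'
              + Phat s' a' h s * |occ π Phat s0 1 h s' a' - occ π P s0 1 h s' a'|) := by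
          refine Finset.sum_congr rfl fun s _ => ?_
          rw [← Finset.sum_mul, hπ1 s (h+1) hmπ, one_mul]
      _ = ∑ s' : S, ∑ a' : A, ∑ s : S,
            (ε s' a' h s * occ π P s0 1 h s' a'
              + Phat s' a' h s * |occ π Phat s0 1 h s' a' - occ π P s0 1 h s' a'|) := by
          rw [Finset.sum_comm]
          exact Finset.sum_congr rfl fun s' _ => Finset.sum_comm
      _ = E h + D h := by
          rw [hE, hD]
          rw [← Finset.sum_add_distrib]
          refine Finset.sum_congr rfl fun s' _ => ?_
          rw [← Finset.sum_add_distrib]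
          refine Finset.sum_congr rfl fun a' _ => ?_
          rw [Finset.sum_add_distrib]
          congr 1
          · exact Finset.sum_congr rfl fun s _ => mul_comm _ _
          · rw [← Finset.sum_mul, hPhat1 s' a' h hmP, one_mul]
  have Enn : ∀ g ∈ Finset.Icc 1 (H-1), 0 ≤ E g := by
    intro g hg
    simp only [Finset.mem_Icc] at hg
    refine Finset.sum_nonneg fun s _ => Finset.sum_nonneg fun a _ =>
      Finset.sum_nonneg fun s' _ => ?_
    exact mul_nonneg (qnn g hg.1 (by omega) s a)
      (hε0 s a g (by simp [Finset.mem_Icc]; omega) s')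
  have hDle : ∀ h, 1 ≤ h → h ≤ H → D h ≤ ∑ g ∈ Finset.Icc 1 (H-1), E g := by
    have main : ∀ h, 1 ≤ h → h ≤ H → D h ≤ ∑ g ∈ Finset.Icc 1 (h-1), E g := by
      intro h
      induction h with
      | zero => omega
      | succ n ih =>
        intro _ h2
        rcases Nat.eq_zero_or_pos n with hn | hn
        · subst hn
          have hD1 : D 1 = 0 := by
            simp [hD, occ_one]
          simp [hD1]
        · have hic : n + 1 - 1 = n := by omega
          rw [hic]
          have hn' : n - 1 + 1 = n := by omega
          have hsum : ∑ g ∈ Finset.Icc 1 n, E g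
              = ∑ g ∈ Finset.Icc 1 (n-1), E g + E n := by
            rw [← hn', Finset.sum_Icc_succ_top (by omega), hn']
          rw [hsum]
          have hs := hstep n hn h2
          have hi := ih hn (by omega)
          linarith
    intro h h1 h2
    refine (main h h1 h2).trans (Finset.sum_le_sum_of_subset_of_nonneg ?_ ?_)
    · exact Finset.Icc_subset_Icc_right (by omega)
    · intro g hg _
      exact Enn g hg
  calc ∑ s : S, ∑ a : A, ∑ h ∈ Finset.Icc 1 H,
          |occ π Phat s0 1 h s a - occ π P s0 1 h s a| * c s a h
      ≤ ∑ s : S, ∑ a : A, ∑ h ∈ Finset.Icc 1 H,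
          |occ π Phat s0 1 h s a - occ π P s0 1 h s a| := by
        refine Finset.sum_le_sum fun s _ => Finset.sum_le_sum fun a _ =>
          Finset.sum_le_sum fun h hh => ?_
        calc |occ π Phat s0 1 h s a - occ π P s0 1 h s a| * c s a h
            ≤ |occ π Phat s0 1 h s a - occ π P s0 1 h s a| * 1 :=
              mul_le_mul_of_nonneg_left (hc1 s a h hh) (abs_nonneg _)
          _ = _ := mul_one _
    _ = ∑ h ∈ Finset.Icc 1 H, D h := by
        simp only [hD]
        calc ∑ s : S, ∑ a : A, ∑ h ∈ Finset.Icc 1 H,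
                |occ π Phat s0 1 h s a - occ π P s0 1 h s a|
            = ∑ s : S, ∑ h ∈ Finset.Icc 1 H, ∑ a : A,
                |occ π Phat s0 1 h s a - occ π P s0 1 h s a| :=
              Finset.sum_congr rfl fun s _ => Finset.sum_comm
          _ = ∑ h ∈ Finset.Icc 1 H, ∑ s : S, ∑ a : A,
                |occ π Phat s0 1 h s a - occ π P s0 1 h s a| := Finset.sum_comm
    _ ≤ ∑ h ∈ Finset.Icc 1 H, ∑ g ∈ Finset.Icc 1 (H-1), E g := by
        refine Finset.sum_le_sum fun h hh => ?_
        simp only [Finset.mem_Icc] at hh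
        exact hDle h hh.1 hh.2
    _ = (H : ℝ) * ∑ g ∈ Finset.Icc 1 (H-1), E g := by
        rw [Finset.sum_const, Nat.card_Icc]
        simp [nsmul_eq_mul]
    _ = (H : ℝ) * ∑ h ∈ Finset.Icc 1 (H - 1), ∑ s : S, ∑ a : A, ∑ s' : S,
          occ π P s0 1 h s a * ε s a h s' := by
        rw [hE]
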